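/- arXiv:2208.04092 — 3 statements merged into one kernel-verified Lean document; each statement's English description precedes it below -/
import Mathlib

section
/- Let ω = α_2 + α_3 + α_4 + α_5 be a polynomial 1-form on ℂ^n, where each α_j has homogeneous polynomial coefficients of degree j, and suppose i_R(ω) = 0 and ω ∧ dω = 0 where R is the Euler vector field. Then α_j ∧ α_k = 0 for all 2 ≤ j < k ≤ 5. -/
/-!
Contracting `ω ∧ dω = 0` with the Euler field `R` gives `i_R ω · dω - ω ∧ i_R dω = 0`, hence
`ω ∧ i_R dω = 0`. By Cartan's formula and Euler's identity, `i_R dω = L_R ω = Σ (j + 1) αⱼ`, so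
`Σ_{j<k} (k - j) αⱼ ∧ αₖ = 0`. Separating degrees kills `α₂ ∧ α₃`, `α₂ ∧ α₄`, `α₃ ∧ α₅`,
`α₄ ∧ α₅` and leaves `3 α₂ ∧ α₅ + α₃ ∧ α₄ = 0` in degree 7. If `α₂ ≠ 0`, then `α₃` and `α₄` are
both proportional to `α₂`, so `α₃ ∧ α₄ = 0` (for `α₂ = 0` this is the degree 7 relation itself);
then also `α₂ ∧ α₅ = 0`.
-/

open MvPolynomial Finset

namespace PolyForm

section Algebra

variable {σ A : Type*} [CommRing A]

/-- Forms are stored as component arrays: a 1-form is `σ → A`, a 2-form `σ → σ → A`, and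
`wedge α β a b`, `wedge₁₂ α F i j k` are the components of `α ∧ β` and `α ∧ F`. -/
def wedge (α β : σ → A) (a b : σ) : A := α a * β b - α b * β a

def wedge₁₂ (α : σ → A) (F : σ → σ → A) (i j k : σ) : A :=
  α i * F j k - α j * F i k + α k * F i j

theorem wedge_eq_zero_of_wedge_eq_zero [IsDomain A] {α β γ : σ → A} (hβ : wedge α β = 0)
    (hγ : wedge α γ = 0) {c : σ} (hc : α c ≠ 0) : wedge β γ = 0 := by
  simp only [funext_iff, wedge, Pi.zero_apply] at hβ hγ ⊢
  intro a b
  have key : α c ^ 2 * (β a * γ b - β b * γ a) = 0 := by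
    linear_combination (-(α c * γ b)) * hβ a c + (α c * γ a) * hβ b c
      + (α b * β c) * hγ a c - (α a * β c) * hγ b c
  exact (mul_eq_zero.mp key).resolve_left (pow_ne_zero 2 hc)

theorem wedge_eq_zero_of_three_mul_wedge_add_wedge_eq_zero [IsDomain A] [CharZero A]
    {α β γ δ : σ → A} (hβ : wedge α β = 0) (hγ : wedge α γ = 0)
    (h : ∀ a b, 3 * wedge α δ a b + wedge β γ a b = 0) : wedge β γ = 0 ∧ wedge α δ = 0 := by
  have hβγ : wedge β γ = 0 := by
    by_cases hα : α = 0
    · funext a b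
      simpa [hα, wedge] using h a b
    · obtain ⟨c, hc⟩ := Function.ne_iff.mp hα
      exact wedge_eq_zero_of_wedge_eq_zero hβ hγ hc
  refine ⟨hβγ, funext₂ fun a b => ?_⟩
  have hab := h a b
  rw [hβγ, Pi.zero_apply, Pi.zero_apply, add_zero] at hab
  exact (mul_eq_zero.mp hab).resolve_left (by norm_num)

variable [Fintype σ]

def interior (x α : σ → A) : A := ∑ i, x i * α i

def interior₂ (x : σ → A) (F : σ → σ → A) (b : σ) : A := ∑ i, x i * F i b

theorem sum_mul_wedge₁₂ (x α : σ → A) (F : σ → σ → A) (a b : σ) :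
    ∑ i, x i * wedge₁₂ α F i a b
      = interior x α * F a b - α a * interior₂ x F b + α b * interior₂ x F a := by
  simp only [wedge₁₂, interior, interior₂, sum_mul, mul_sum, ← sum_sub_distrib,
    ← sum_add_distrib]
  exact sum_congr rfl fun i _ => by ring

theorem wedge_interior₂_eq_zero {x α : σ → A} {F : σ → σ → A} (hα : interior x α = 0)
    (hF : ∀ i j k, wedge₁₂ α F i j k = 0) : wedge α (interior₂ x F) = 0 := by
  funext a b
  have h := sum_mul_wedge₁₂ x α F a b
  simp only [hF, mul_zero, sum_const_zero, hα, zero_mul, zero_sub] at h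
  simp only [wedge, Pi.zero_apply]
  linear_combination h

end Algebra

section Polynomial

variable {σ R : Type*} [CommRing R]

noncomputable def exteriorDeriv (ω : σ → MvPolynomial σ R) (a b : σ) : MvPolynomial σ R :=
  pderiv a (ω b) - pderiv b (ω a)

/-- Cartan's formula `i_R dω = L_R ω - d (i_R ω)` for the Euler field `R = Σ Xᵢ ∂ᵢ`, where
`(L_R ω)_b = Σ Xᵢ ∂ᵢ ω_b + ω_b`. -/
theorem interior₂_X_exteriorDeriv [Fintype σ] (ω : σ → MvPolynomial σ R) (b : σ) :
    interior₂ X (exteriorDeriv ω) b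
      = ∑ i, X i * pderiv i (ω b) + ω b - pderiv b (interior X ω) := by
  classical
  have hX : ∑ i, ω i * pderiv b (X i) = ω b := by
    simp [pderiv_X, Pi.single_apply]
  simp only [interior₂, exteriorDeriv, interior, map_sum, Derivation.leibniz, smul_eq_mul,
    mul_sub, sum_sub_distrib, sum_add_distrib, hX]
  ring

theorem isHomogeneous_wedge {ι : Type*} {α β : ι → MvPolynomial σ R} {m k : ℕ}
    (hα : ∀ a, (α a).IsHomogeneous m) (hβ : ∀ b, (β b).IsHomogeneous k) (a b : ι) :
    (wedge α β a b).IsHomogeneous (m + k) :=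
  ((hα a).mul (hβ b)).sub ((hα b).mul (hβ a))

theorem eq_zero_of_sum_eq_zero_of_isHomogeneous {ι : Type*} [Fintype ι]
    {p : ι → MvPolynomial σ R} {deg : ι → ℕ} (hdeg : deg.Injective)
    (hp : ∀ i, (p i).IsHomogeneous (deg i)) (h : ∑ i, p i = 0) (i : ι) : p i = 0 := by
  have h' := congrArg (homogeneousComponent (deg i)) h
  rwa [map_sum, map_zero, sum_eq_single i (fun j _ hj => ?_) (by simp),
    homogeneousComponent_eq_self (hp i)] at h'
  rw [homogeneousComponent_of_mem (hp j), if_neg (hdeg.ne hj.symm)]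

theorem wedge_homogeneous_parts_eq_zero [IsDomain R] [CharZero R] {ι : Type*}
    {α2 α3 α4 α5 : ι → MvPolynomial σ R}
    (h2 : ∀ i, (α2 i).IsHomogeneous 2) (h3 : ∀ i, (α3 i).IsHomogeneous 3)
    (h4 : ∀ i, (α4 i).IsHomogeneous 4) (h5 : ∀ i, (α5 i).IsHomogeneous 5)
    (h : wedge (α2 + α3 + α4 + α5) (3 * α2 + 4 * α3 + 5 * α4 + 6 * α5) = 0) :
    wedge α2 α3 = 0 ∧ wedge α2 α4 = 0 ∧ (∀ a b, 3 * wedge α2 α5 a b + wedge α3 α4 a b = 0) ∧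
      wedge α3 α5 = 0 ∧ wedge α4 α5 = 0 := by
  -- `ω ∧ Σ (j + 1) αⱼ = Σ_{j<k} (k - j) αⱼ ∧ αₖ`, grouped by the degree `j + k`
  have hpart (a b : ι) : ∀ i, ![wedge α2 α3 a b, 2 * wedge α2 α4 a b,
      3 * wedge α2 α5 a b + wedge α3 α4 a b, 2 * wedge α3 α5 a b, wedge α4 α5 a b] i = 0 := by
    refine eq_zero_of_sum_eq_zero_of_isHomogeneous (deg := ![5, 6, 7, 8, 9]) (by decide)
      (fun i => ?_) ?_
    · fin_cases i
      · exact isHomogeneous_wedge h2 h3 a b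
      · rw [← map_ofNat C 2]; exact (isHomogeneous_wedge h2 h4 a b).C_mul 2
      · rw [← map_ofNat C 3]
        exact ((isHomogeneous_wedge h2 h5 a b).C_mul 3).add (isHomogeneous_wedge h3 h4 a b)
      · rw [← map_ofNat C 2]; exact (isHomogeneous_wedge h3 h5 a b).C_mul 2
      · exact isHomogeneous_wedge h4 h5 a b
    · have hab := congr_fun₂ h a b
      simp only [wedge, Pi.add_apply, Pi.mul_apply, Pi.ofNat_apply] at hab
      simp only [Fin.sum_univ_five, Matrix.cons_val, wedge]
      linear_combination hab
  have cancel_two {p : MvPolynomial σ R} (hp : 2 * p = 0) : p = 0 :=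
    (mul_eq_zero.mp hp).resolve_left two_ne_zero
  exact ⟨funext₂ fun a b => hpart a b 0, funext₂ fun a b => cancel_two (hpart a b 1),
    fun a b => hpart a b 2, funext₂ fun a b => cancel_two (hpart a b 3),
    funext₂ fun a b => hpart a b 4⟩

end Polynomial

end PolyForm

open PolyForm

theorem homogeneous_pieces_wedge_vanish
    (n : ℕ) (α2 α3 α4 α5 ω : Fin n → MvPolynomial (Fin n) ℂ)
    (h2 : ∀ i, (α2 i).IsHomogeneous 2)
    (h3 : ∀ i, (α3 i).IsHomogeneous 3)
    (h4 : ∀ i, (α4 i).IsHomogeneous 4)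
    (h5 : ∀ i, (α5 i).IsHomogeneous 5)
    (hω : ∀ i, ω i = α2 i + α3 i + α4 i + α5 i)
    (hiR : ∑ i, X i * ω i = 0)
    (hint : ∀ i j k : Fin n,
      ω i * (pderiv j (ω k) - pderiv k (ω j))
        - ω j * (pderiv i (ω k) - pderiv k (ω i))
        + ω k * (pderiv i (ω j) - pderiv j (ω i)) = 0) :
    (∀ a b : Fin n, α2 a * α3 b - α2 b * α3 a = 0) ∧
    (∀ a b : Fin n, α2 a * α4 b - α2 b * α4 a = 0) ∧
    (∀ a b : Fin n, α2 a * α5 b - α2 b * α5 a = 0) ∧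
    (∀ a b : Fin n, α3 a * α4 b - α3 b * α4 a = 0) ∧
    (∀ a b : Fin n, α3 a * α5 b - α3 b * α5 a = 0) ∧
    (∀ a b : Fin n, α4 a * α5 b - α4 b * α5 a = 0) := by
  obtain rfl : ω = α2 + α3 + α4 + α5 := funext hω
  have hLie : interior₂ X (exteriorDeriv (α2 + α3 + α4 + α5))
      = 3 * α2 + 4 * α3 + 5 * α4 + 6 * α5 := by
    funext b
    rw [interior₂_X_exteriorDeriv, PolyForm.interior, hiR, map_zero, sub_zero]
    simp only [Pi.add_apply, Pi.mul_apply, Pi.ofNat_apply, map_add, mul_add, sum_add_distrib,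
      (h2 b).sum_X_mul_pderiv, (h3 b).sum_X_mul_pderiv, (h4 b).sum_X_mul_pderiv,
      (h5 b).sum_X_mul_pderiv]
    ring
  have hwedge : wedge (α2 + α3 + α4 + α5) (3 * α2 + 4 * α3 + 5 * α4 + 6 * α5) = 0 := by
    rw [← hLie]
    exact wedge_interior₂_eq_zero hiR hint
  obtain ⟨h23, h24, h25_34, h35, h45⟩ := wedge_homogeneous_parts_eq_zero h2 h3 h4 h5 hwedge
  obtain ⟨h34, h25⟩ := wedge_eq_zero_of_three_mul_wedge_add_wedge_eq_zero h23 h24 h25_34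
  exact ⟨congr_fun₂ h23, congr_fun₂ h24, congr_fun₂ h25, congr_fun₂ h34, congr_fun₂ h35,
    congr_fun₂ h45⟩
end

section
/- Let β_0, β_1, β_2 be 1-forms on a manifold M satisfying dβ_0 = 0, dβ_1 = 2β_0 ∧ β_2, dβ_2 = β_1 ∧ β_2, and β_0 ∧ β_1 = 0 with β_0 ≠ 0. Suppose β_1 = g β_0 for a meromorphic function g. Then there exists a meromorphic function h with β_2 = h β_0 − dg/2, and moreover d(h − g²/4) ∧ β_0 = 0. -/
/-!
Since `β₀` is closed, `d(g β₀) = dg ∧ β₀`, so `dβ₁ = 2 β₀ ∧ β₂` says that `β₀ ∧ (β₂ + dg/2) = 0`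
and the division property produces `h`. Differentiating `β₂ = h β₀ − dg/2` gives
`dβ₂ = dh ∧ β₀`, while `β₁ ∧ β₂ = g β₀ ∧ (h β₀ − dg/2) = (g/2) dg ∧ β₀ = d(g²/4) ∧ β₀`.
Comparing the two expressions for `dβ₂` gives `d(h − g²/4) ∧ β₀ = 0`.
-/

namespace Derivation

variable {R K M : Type*} [CommRing R] [Field K] [AddCommGroup M] [Algebra R K] [Module K M]
  [Module R M] (D : Derivation R K M)

theorem map_ofNat (n : ℕ) [n.AtLeastTwo] : D (OfNat.ofNat n : K) = 0 :=
  D.map_natCast n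

theorem map_inv_ofNat (n : ℕ) [n.AtLeastTwo] : D (OfNat.ofNat n : K)⁻¹ = 0 := by
  rw [leibniz_inv, map_ofNat, smul_zero]

theorem leibniz_sq_div_four (a : K) : D (a ^ 2 / 4) = (a / 2) • D a := by
  rw [D.leibniz_div_const _ _ (D.map_ofNat 4), D.leibniz_pow, ← Nat.cast_smul_eq_nsmul K,
    smul_smul, smul_smul]
  congr 1
  rw [show (4 : K) = 2 * 2 by norm_num]
  rcases eq_or_ne (2 : K) 0 with h2 | h2
  · simp [h2]
  · field_simp; norm_num

end Derivation

namespace LinearMap.IsAlt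

variable {F O1 O2 : Type*} [Field F] [AddCommGroup O1] [AddCommGroup O2] [Module F O1]
  [Module F O2] {w : O1 →ₗ[F] O1 →ₗ[F] O2}

theorem exists_eq_smul_sub_inv_smul (hw : w.IsAlt) {β γ δ : O1}
    (hdiv : ∀ ε : O1, w β ε = 0 → ∃ f : F, ε = f • β) {c : F} (hc : c ≠ 0)
    (h : c • w β γ = w δ β) : ∃ f : F, γ = f • β - c⁻¹ • δ := by
  have hker : w β (γ + c⁻¹ • δ) = 0 := by
    rw [map_add, map_smul, ← hw.neg δ β, ← h, smul_neg, smul_smul, inv_mul_cancel₀ hc, one_smul,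
      add_neg_cancel]
  obtain ⟨f, hf⟩ := hdiv _ hker
  exact ⟨f, by rw [← hf, add_sub_cancel_right]⟩

theorem apply_smul_smul_sub (hw : w.IsAlt) (β δ : O1) (a b c : F) :
    w (a • β) (b • β - c • δ) = (a * c) • w δ β := by
  simp [hw.self_eq_zero, ← hw.neg δ β, smul_smul]

end LinearMap.IsAlt

theorem existence_of_h_and_first_integral_relation_general
    -- Abstract exterior calculus of meromorphic forms:
    -- F = meromorphic functions, O1/O2/O3 = meromorphic 1-/2-/3-forms
    (F : Type*) [Field F] [CharZero F]
    (O1 O2 : Type*)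
    [AddCommGroup O1] [AddCommGroup O2]
    [Module F O1] [Module F O2]
    -- exterior derivatives
    (d0 : F →+ O1) (d1 : O1 →+ O2)
    -- wedge products (1-form ∧ 1-form, 1-form ∧ 2-form)
    (w11 : O1 →ₗ[F] O1 →ₗ[F] O2)
    (hd0mul : ∀ f g : F, d0 (f * g) = f • d0 g + g • d0 f)
    (hd1smul : ∀ (f : F) (a : O1), d1 (f • a) = w11 (d0 f) a + f • d1 a)
    (hd1d0 : ∀ f : F, d1 (d0 f) = 0)
    (halt : ∀ a : O1, w11 a a = 0)
    (β0 β1 β2 : O1)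
    (hβ0 : d1 β0 = 0)
    (hβ1 : d1 β1 = (2 : F) • w11 β0 β2)
    (hβ2 : d1 β2 = w11 β1 β2)
    -- division property for 1-forms
    (hdiv : ∀ γ : O1, w11 β0 γ = 0 → ∃ f : F, γ = f • β0)
    (g : F) (hg : β1 = g • β0) :
    ∃ h : F, β2 = h • β0 - (2 : F)⁻¹ • d0 g ∧ w11 (d0 (h - g ^ 2 / 4)) β0 = 0 := by
  let D : Derivation ℤ F O1 := Derivation.mk' d0.toIntLinearMap hd0mul
  have hw : w11.IsAlt := halt
  have hd1_smul_β0 (f : F) : d1 (f • β0) = w11 (d0 f) β0 := by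
    rw [hd1smul, hβ0, smul_zero, add_zero]
  obtain ⟨h, hβ2h⟩ :=
    hw.exists_eq_smul_sub_inv_smul hdiv two_ne_zero (by rw [← hβ1, hg, hd1_smul_β0])
  refine ⟨h, hβ2h, ?_⟩
  have hd1_half_dg : d1 ((2 : F)⁻¹ • d0 g) = 0 := by
    rw [hd1smul, show d0 (2 : F)⁻¹ = 0 from D.map_inv_ofNat 2, hd1d0, map_zero,
      LinearMap.zero_apply, smul_zero, add_zero]
  have hdh : w11 (d0 h) β0 = w11 (d0 (g ^ 2 / 4)) β0 := calc
    w11 (d0 h) β0 = d1 β2 := by rw [hβ2h, map_sub, hd1_smul_β0, hd1_half_dg, sub_zero]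
    _ = (g * 2⁻¹) • w11 (d0 g) β0 := by rw [hβ2, hg, hβ2h, hw.apply_smul_smul_sub]
    _ = w11 (d0 (g ^ 2 / 4)) β0 := by
      rw [show d0 (g ^ 2 / 4) = (g / 2) • d0 g from D.leibniz_sq_div_four g, map_smul,
        LinearMap.smul_apply, div_eq_mul_inv]
  rw [map_sub, map_sub, LinearMap.sub_apply, hdh, sub_self]

theorem existence_of_h_and_first_integral_relation
    -- Abstract exterior calculus of meromorphic forms:
    -- F = meromorphic functions, O1/O2/O3 = meromorphic 1-/2-/3-forms
    (F : Type*) [Field F] [CharZero F]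
    (O1 O2 O3 : Type*)
    [AddCommGroup O1] [AddCommGroup O2] [AddCommGroup O3]
    [Module F O1] [Module F O2] [Module F O3]
    -- exterior derivatives
    (d0 : F →+ O1) (d1 : O1 →+ O2) (d2 : O2 →+ O3)
    -- wedge products (1-form ∧ 1-form, 1-form ∧ 2-form)
    (w11 : O1 →ₗ[F] O1 →ₗ[F] O2) (w12 : O1 →ₗ[F] O2 →ₗ[F] O3)
    (hd0mul : ∀ f g : F, d0 (f * g) = f • d0 g + g • d0 f)
    (hd1smul : ∀ (f : F) (a : O1), d1 (f • a) = w11 (d0 f) a + f • d1 a)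
    (hd2smul : ∀ (f : F) (m : O2), d2 (f • m) = w12 (d0 f) m + f • d2 m)
    (hd1d0 : ∀ f : F, d1 (d0 f) = 0)
    (hd2d1 : ∀ a : O1, d2 (d1 a) = 0)
    (halt : ∀ a : O1, w11 a a = 0)
    (hanti : ∀ a b : O1, w11 a b = - w11 b a)
    (hd2w11 : ∀ a b : O1, d2 (w11 a b) = w12 b (d1 a) - w12 a (d1 b))
    (β0 β1 β2 : O1)
    (hβ0 : d1 β0 = 0)
    (hβ1 : d1 β1 = (2 : F) • w11 β0 β2)
    (hβ2 : d1 β2 = w11 β1 β2)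
    (hw01 : w11 β0 β1 = 0)
    (hβ0ne : β0 ≠ 0)
    -- division property for 1-forms
    (hdiv : ∀ γ : O1, w11 β0 γ = 0 → ∃ f : F, γ = f • β0)
    (g : F) (hg : β1 = g • β0) :
    ∃ h : F, β2 = h • β0 - (2 : F)⁻¹ • d0 g ∧ w11 (d0 (h - g ^ 2 / 4)) β0 = 0 :=
  existence_of_h_and_first_integral_relation_general F O1 O2 d0 d1 w11 hd0mul hd1smul hd1d0 halt β0
    β1 β2 hβ0 hβ1 hβ2 hdiv g hg
end

section
/- Let ω = α_2 + α_3 + α_4 + α_5 with α_j homogeneous of degree j and i_R(α_5) = 0. Then under the blow-up chart σ(τ,x) = (xτ, x), one has σ*(ω) = x²·η where η = x θ_2 + x² θ_3 + x³ θ_4 + x⁴ θ_5 + (F_3(τ,1) + x F_4(τ,1) + x² F_5(τ,1)) dx; in particular the coefficient of x³ dx vanishes because F_6(τ,1) = i_R(α_5)(τ,1) = 0. -/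
/-!
Write `σ` for the chart `(τ, x) ↦ (x τ, x)`. A polynomial homogeneous of degree `j` pulls back
to `x ^ j` times its restriction to `x = 1`, which gives the `dτᵢ`-coefficients at once. The
`dx`-coefficient of `σ*(αⱼ)` is `Σᵢ τᵢ σ*(Pⱼᵢ) + σ*(Pⱼₙ)`, i.e. the pull-back of the Euler
contraction `i_R(αⱼ)`, hence equals `x ^ j F_{j+1}(τ, 1)`; for `j = 5` this vanishes.
-/

open MvPolynomial

theorem MvPolynomial.IsHomogeneous.aeval_mul {σ R S : Type*} [CommSemiring R] [CommSemiring S]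
    [Algebra R S] {d : ℕ} {P : MvPolynomial σ R} (hP : P.IsHomogeneous d) (r : S) (f : σ → S) :
    MvPolynomial.aeval (fun i => r * f i) P = r ^ d * MvPolynomial.aeval f P := by
  conv_lhs => rw [P.as_sum]
  conv_rhs => rw [P.as_sum]
  rw [map_sum, map_sum, Finset.mul_sum]
  refine Finset.sum_congr rfl fun s hs => ?_
  have hdeg : (s.sum fun _ e => e) = d := by
    simpa [Finsupp.weight_apply, Finsupp.sum] using hP (mem_support_iff.mp hs)
  simp only [aeval_monomial, mul_pow, Finsupp.prod_mul]
  rw [← hdeg, Finsupp.prod, Finsupp.sum, Finset.prod_pow_eq_pow_sum]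
  ring

section BlowUpChart

variable {σ R : Type*} [CommSemiring R] [DecidableEq σ]

/-- Pull-back along the blow-up chart `(τ, x) ↦ (x τ, x)`, the variable `j` playing `x`. -/
noncomputable def blowUpChart (j : σ) : MvPolynomial σ R →ₐ[R] MvPolynomial σ R :=
  aeval fun i => if i = j then X j else X j * X i

/-- Restriction to `x = 1`, the variable `j` playing `x`. -/
noncomputable def dehomogenize (j : σ) : MvPolynomial σ R →ₐ[R] MvPolynomial σ R :=
  aeval fun i => if i = j then 1 else X i

theorem MvPolynomial.IsHomogeneous.blowUpChart_eq {d : ℕ} {P : MvPolynomial σ R}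
    (hP : P.IsHomogeneous d) (j : σ) : blowUpChart j P = X j ^ d * dehomogenize j P := by
  rw [blowUpChart, dehomogenize, ← hP.aeval_mul]
  congr 2 with i
  split_ifs <;> simp

end BlowUpChart

section EulerContraction

variable {R : Type*} [CommSemiring R] {n : ℕ}

theorem dehomogenize_last_sum_X_mul (P : Fin (n + 1) → MvPolynomial (Fin (n + 1)) R) :
    dehomogenize (Fin.last n) (∑ i, X i * P i)
      = ∑ i : Fin n, X i.castSucc * dehomogenize (Fin.last n) (P i.castSucc)
        + dehomogenize (Fin.last n) (P (Fin.last n)) := by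
  simp [Fin.sum_univ_castSucc, dehomogenize, (Fin.castSucc_lt_last _).ne]

theorem blowUpChart_last_sum_X_mul {d : ℕ} {P : Fin (n + 1) → MvPolynomial (Fin (n + 1)) R}
    (hP : ∀ i, (P i).IsHomogeneous d) :
    ∑ i : Fin n, X i.castSucc * blowUpChart (Fin.last n) (P i.castSucc)
        + blowUpChart (Fin.last n) (P (Fin.last n))
      = X (Fin.last n) ^ d * dehomogenize (Fin.last n) (∑ i, X i * P i) := by
  simp only [(hP _).blowUpChart_eq, dehomogenize_last_sum_X_mul, mul_add, Finset.mul_sum,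
    mul_left_comm]

end EulerContraction

theorem blowup_pullback_of_degree_four_form
    (n : ℕ) (P2 P3 P4 P5 : Fin (n + 1) → MvPolynomial (Fin (n + 1)) ℂ)
    (h2 : ∀ i, (P2 i).IsHomogeneous 2)
    (h3 : ∀ i, (P3 i).IsHomogeneous 3)
    (h4 : ∀ i, (P4 i).IsHomogeneous 4)
    (h5 : ∀ i, (P5 i).IsHomogeneous 5)
    -- i_R(α₅) = 0 on ℂ^{n+1}
    (hiR : ∑ i, X i * P5 i = 0)
    (subst : MvPolynomial (Fin (n + 1)) ℂ →ₐ[ℂ] MvPolynomial (Fin (n + 1)) ℂ)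
    (hsubst : subst = aeval fun i : Fin (n + 1) =>
      if i = Fin.last n then X (Fin.last n) else X (Fin.last n) * X i)
    (atOne : MvPolynomial (Fin (n + 1)) ℂ →ₐ[ℂ] MvPolynomial (Fin (n + 1)) ℂ)
    (hatOne : atOne = aeval fun i : Fin (n + 1) =>
      if i = Fin.last n then 1 else X i)
    (F3 F4 F5 : MvPolynomial (Fin (n + 1)) ℂ)
    (hF3 : F3 = (∑ i : Fin n, X i.castSucc * atOne (P2 i.castSucc)) + atOne (P2 (Fin.last n)))
    (hF4 : F4 = (∑ i : Fin n, X i.castSucc * atOne (P3 i.castSucc)) + atOne (P3 (Fin.last n)))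
    (hF5 : F5 = (∑ i : Fin n, X i.castSucc * atOne (P4 i.castSucc)) + atOne (P4 (Fin.last n))) :
    -- dτ_i coefficients of σ*(ω) equal x² times those of η
    (∀ i : Fin n,
      X (Fin.last n) *
          (subst (P2 i.castSucc) + subst (P3 i.castSucc)
            + subst (P4 i.castSucc) + subst (P5 i.castSucc))
        = X (Fin.last n) ^ 2 *
          (X (Fin.last n) * atOne (P2 i.castSucc)
            + X (Fin.last n) ^ 2 * atOne (P3 i.castSucc)
            + X (Fin.last n) ^ 3 * atOne (P4 i.castSucc)
            + X (Fin.last n) ^ 4 * atOne (P5 i.castSucc))) ∧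
    -- dx coefficient of σ*(ω) equals x²(F₃ + x F₄ + x² F₅): no x³-term, since F₆ = 0
    ((∑ i : Fin n, X i.castSucc *
          (subst (P2 i.castSucc) + subst (P3 i.castSucc)
            + subst (P4 i.castSucc) + subst (P5 i.castSucc)))
        + (subst (P2 (Fin.last n)) + subst (P3 (Fin.last n))
            + subst (P4 (Fin.last n)) + subst (P5 (Fin.last n)))
      = X (Fin.last n) ^ 2 *
          (F3 + X (Fin.last n) * F4 + X (Fin.last n) ^ 2 * F5)) := by
  obtain rfl : subst = blowUpChart (Fin.last n) := hsubst
  obtain rfl : atOne = dehomogenize (Fin.last n) := hatOne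
  subst hF3 hF4 hF5
  constructor
  · intro i
    rw [(h2 _).blowUpChart_eq, (h3 _).blowUpChart_eq, (h4 _).blowUpChart_eq,
      (h5 _).blowUpChart_eq]
    ring
  · calc _ = (∑ i : Fin n, X i.castSucc * blowUpChart (Fin.last n) (P2 i.castSucc)
              + blowUpChart (Fin.last n) (P2 (Fin.last n)))
          + (∑ i : Fin n, X i.castSucc * blowUpChart (Fin.last n) (P3 i.castSucc)
              + blowUpChart (Fin.last n) (P3 (Fin.last n)))
          + (∑ i : Fin n, X i.castSucc * blowUpChart (Fin.last n) (P4 i.castSucc)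
              + blowUpChart (Fin.last n) (P4 (Fin.last n)))
          + (∑ i : Fin n, X i.castSucc * blowUpChart (Fin.last n) (P5 i.castSucc)
              + blowUpChart (Fin.last n) (P5 (Fin.last n))) := by
          simp only [mul_add, Finset.sum_add_distrib]
          ring
      _ = _ := by
          rw [blowUpChart_last_sum_X_mul h2, blowUpChart_last_sum_X_mul h3,
            blowUpChart_last_sum_X_mul h4, blowUpChart_last_sum_X_mul h5, hiR, map_zero,
            dehomogenize_last_sum_X_mul, dehomogenize_last_sum_X_mul, dehomogenize_last_sum_X_mul]
          ring
end
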